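/- Let D(x) = ∑_{n≥0} a(n,n) x^n be the diagonal generating function of the 2-dimensional rook walk numbers, viewed as a formal power series over ℚ. Then (1 − 10x + 9x²)·(2·D(x) − 1)² = (1 − x)² as formal power series; equivalently, D(x) = 1/2 + (1−x)/(2√(1−10x+9x²)). -/

import Mathlib

/-- The set of `d`-dimensional rook walks from the origin to `v`: a walk is a
finite sequence of steps, each step adding a positive integer amount to
exactly one coordinate (a step is recorded as a pair of the chosen coordinate
and the positive amount added). -/
def RookWalks (d : ℕ) (v : Fin d → ℕ) : Set (List (Fin d × ℕ)) :=
  {L | (∀ s ∈ L, 0 < s.2) ∧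
       ∀ i : Fin d, (L.map (fun s => if s.1 = i then s.2 else 0)).sum = v i}

/-- The number of `d`-dimensional rook walks from the origin to `v`. -/
noncomputable def rookWalkCount (d : ℕ) (v : Fin d → ℕ) : ℕ :=
  (RookWalks d v).ncard

/-!
Splitting a walk at its first step gives `a(n, m) = ∑_{k<n} a(k, m) + ∑_{j<m} a(n, j)` away from
the origin. This says exactly that the partial sums `B(n, m) = ∑_{k≤n, j≤m} a(k, j)` satisfy
`B(n+1, m+1) = 2 B(n, m+1) + 2 B(n+1, m) - 3 B(n, m)` with `B(n, 0) = 2ⁿ`, `B(0, m) = 2ᵐ`; the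
coefficient of `zᵐ` in `(2+z)ⁿ(1+2z)ᵐ` has the same recurrence and boundary values, hence equals
`B(n, m)`. On the diagonal the mixed difference of these coefficients is, since
`2(1+z)² = (2+z)(1+2z) - z`, half the difference of two consecutive central coefficients
`t(n) = [zⁿ](2+5z+2z²)ⁿ`, so `2D - 1 = (1-x)T` with `T = ∑ t(n) xⁿ`.

Central coefficients of `a + bz + cz²` satisfy
`(n+2) t(n+2) = (2n+3) b t(n+1) - (n+1)(b² - 4ac) t(n)`: compare the coefficients of `p^(n+1) = p·pⁿ`
and of its derivative `(n+1) p' pⁿ`. This recurrence is the differential equation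
`(1 - 2bx + (b²-4ac)x²) T' = (b - (b²-4ac)x) T`, so `(1 - 2bx + (b²-4ac)x²) T²` has derivative zero
and equals its constant term `1`.
-/

section RookWalks

open Finset

variable {d : ℕ}

lemma nil_mem_rookWalks_iff {v : Fin d → ℕ} : [] ∈ RookWalks d v ↔ v = 0 := by
  simp [RookWalks, funext_iff, eq_comm]

lemma cons_mem_rookWalks_iff {v : Fin d → ℕ} {i : Fin d} {c : ℕ} {L : List (Fin d × ℕ)} :
    (i, c) :: L ∈ RookWalks d v ↔
      0 < c ∧ c ≤ v i ∧ L ∈ RookWalks d (Function.update v i (v i - c)) := by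
  simp only [RookWalks, Set.mem_ofPred_eq, List.forall_mem_cons, List.map_cons, List.sum_cons]
  constructor
  · rintro ⟨⟨hc, hL⟩, hsum⟩
    have hi := hsum i
    simp only [if_true] at hi
    refine ⟨hc, by omega, hL, fun j => ?_⟩
    rcases eq_or_ne j i with rfl | hj
    · simp only [Function.update_self]; omega
    · simpa [Function.update_of_ne hj, Ne.symm hj] using hsum j
  · rintro ⟨hc, hci, hL, hsum⟩
    refine ⟨⟨hc, hL⟩, fun j => ?_⟩
    rcases eq_or_ne j i with rfl | hj
    · simp only [if_true, hsum, Function.update_self]; omega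
    · simpa [Function.update_of_ne hj, Ne.symm hj] using hsum j

lemma rookWalks_zero : RookWalks d 0 = {[]} := by
  ext L
  rcases L with _ | ⟨⟨i, c⟩, L⟩
  · simp [nil_mem_rookWalks_iff]
  · simp only [cons_mem_rookWalks_iff, Pi.zero_apply, Set.mem_singleton_iff, reduceCtorEq,
      iff_false]
    omega

lemma rookWalks_eq_biUnion {v : Fin d → ℕ} (hv : v ≠ 0) :
    RookWalks d v = ⋃ p ∈ (univ.sigma fun i => range (v i) : Finset (Σ _ : Fin d, ℕ)),
      List.cons (p.1, v p.1 - p.2) '' RookWalks d (Function.update v p.1 p.2) := by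
  ext L
  rcases L with _ | ⟨⟨i, c⟩, L⟩
  · simp [nil_mem_rookWalks_iff, hv]
  · simp only [cons_mem_rookWalks_iff, Set.mem_iUnion, Set.mem_image, List.cons.injEq,
      Prod.mk.injEq, mem_sigma, mem_range, mem_univ, true_and, exists_prop, Sigma.exists]
    constructor
    · rintro ⟨hc, hci, hL⟩
      exact ⟨i, v i - c, by omega, L, hL, ⟨rfl, by omega⟩, rfl⟩
    · rintro ⟨j, k, hk, L', hL', ⟨rfl, rfl⟩, rfl⟩
      refine ⟨by omega, by omega, ?_⟩
      rwa [Nat.sub_sub_self hk.le]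

lemma rookWalks_finite (v : Fin d → ℕ) : (RookWalks d v).Finite := by
  induction h : ∑ i, v i using Nat.strong_induction_on generalizing v with
  | _ N ih =>
    rcases eq_or_ne v 0 with rfl | hv
    · simp [rookWalks_zero]
    rw [rookWalks_eq_biUnion hv]
    refine (finite_toSet _).biUnion fun ⟨i, k⟩ hik => (ih _ ?_ _ rfl).image _
    simp only [coe_sigma, Set.mem_sigma_iff, coe_univ, Set.mem_univ, coe_range, Set.mem_Iio,
      true_and] at hik
    rw [← h]
    refine sum_lt_sum (fun j _ => ?_) ⟨i, mem_univ _, by simpa using hik⟩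
    rcases eq_or_ne j i with rfl | hj
    · simp only [Function.update_self]; omega
    · simp [Function.update_of_ne hj]

lemma rookWalkCount_zero : rookWalkCount d 0 = 1 := by
  simp [rookWalkCount, rookWalks_zero]

lemma rookWalkCount_eq_sum {v : Fin d → ℕ} (hv : v ≠ 0) :
    rookWalkCount d v = ∑ i, ∑ k ∈ range (v i), rookWalkCount d (Function.update v i k) := by
  rw [rookWalkCount, rookWalks_eq_biUnion hv, ← set_biUnion_coe, Set.Finite.ncard_biUnion
    (finite_toSet _) (fun p _ => (rookWalks_finite _).image _), finsum_mem_coe_finset, sum_sigma]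
  · exact sum_congr rfl fun i _ => sum_congr rfl fun k _ =>
      Set.ncard_image_of_injective _ List.cons_injective
  · rintro ⟨i, k⟩ hik ⟨j, l⟩ hjl hne
    refine Set.disjoint_left.2 ?_
    rintro _ ⟨L, -, rfl⟩ ⟨L', -, h⟩
    simp only [coe_sigma, Set.mem_sigma_iff, coe_univ, Set.mem_univ, coe_range, Set.mem_Iio,
      true_and] at hik hjl
    simp only [List.cons.injEq, Prod.mk.injEq] at h
    obtain ⟨⟨rfl, h⟩, -⟩ := h
    exact hne (by rw [show l = k by omega])

lemma rookWalkCount_two_eq_sum {n m : ℕ} (h : n ≠ 0 ∨ m ≠ 0) :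
    rookWalkCount 2 ![n, m] =
      ∑ k ∈ range n, rookWalkCount 2 ![k, m] + ∑ j ∈ range m, rookWalkCount 2 ![n, j] := by
  have h₀ (k : ℕ) : Function.update ![n, m] 0 k = ![k, m] := by ext i; fin_cases i <;> rfl
  have h₁ (j : ℕ) : Function.update ![n, m] 1 j = ![n, j] := by ext i; fin_cases i <;> rfl
  rw [rookWalkCount_eq_sum (by simpa [funext_iff, Fin.forall_fin_two, imp_iff_not_or] using h),
    Fin.sum_univ_two]
  simp [h₀, h₁]

end RookWalks

section DoubleSequences

open Finset

lemma eq_of_recurrence_of_axes {α : Type*} {f g : ℕ → ℕ → α} (step : α → α → α → α)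
    (hf : ∀ n m, f (n + 1) (m + 1) = step (f n (m + 1)) (f (n + 1) m) (f n m))
    (hg : ∀ n m, g (n + 1) (m + 1) = step (g n (m + 1)) (g (n + 1) m) (g n m))
    (h_left : ∀ m, f 0 m = g 0 m) (h_right : ∀ n, f n 0 = g n 0) : f = g := by
  funext n m
  induction n generalizing m with
  | zero => exact h_left m
  | succ n ihn =>
    induction m with
    | zero => exact h_right _
    | succ m ihm => rw [hf, hg, ihn, ihn, ihm]

def doublePartialSum {M : Type*} [AddCommMonoid M] (f : ℕ → ℕ → M) (n m : ℕ) : M :=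
  ∑ k ∈ range (n + 1), ∑ j ∈ range (m + 1), f k j

section AddCommMonoid

variable {M : Type*} [AddCommMonoid M] (f : ℕ → ℕ → M) (n m : ℕ)

lemma doublePartialSum_succ_left :
    doublePartialSum f (n + 1) m = doublePartialSum f n m + ∑ j ∈ range (m + 1), f (n + 1) j :=
  sum_range_succ _ _

lemma doublePartialSum_succ_right :
    doublePartialSum f n (m + 1) = doublePartialSum f n m + ∑ k ∈ range (n + 1), f k (m + 1) := by
  simp only [doublePartialSum, sum_range_succ _ (m + 1), sum_add_distrib]

lemma doublePartialSum_flip : doublePartialSum (flip f) m n = doublePartialSum f n m :=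
  sum_comm

end AddCommMonoid

lemma apply_succ_succ_eq_doublePartialSum {M : Type*} [AddCommGroup M] (f : ℕ → ℕ → M)
    (n m : ℕ) :
    f (n + 1) (m + 1) = doublePartialSum f (n + 1) (m + 1) - doublePartialSum f n (m + 1) -
      doublePartialSum f (n + 1) m + doublePartialSum f n m := by
  rw [doublePartialSum_succ_left f n (m + 1), doublePartialSum_succ_left f n m, sum_range_succ]
  abel

variable {R : Type*} [CommRing R] {f : ℕ → ℕ → R}

lemma doublePartialSum_succ_succ
    (hf : ∀ n m, n ≠ 0 ∨ m ≠ 0 → f n m = ∑ k ∈ range n, f k m + ∑ j ∈ range m, f n j)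
    (n m : ℕ) :
    doublePartialSum f (n + 1) (m + 1) =
      2 * doublePartialSum f n (m + 1) + 2 * doublePartialSum f (n + 1) m
        - 3 * doublePartialSum f n m := by
  have h := apply_succ_succ_eq_doublePartialSum f n m
  rw [hf _ _ (.inl n.succ_ne_zero)] at h
  linear_combination -h - doublePartialSum_succ_left f n m - doublePartialSum_succ_right f n m

lemma doublePartialSum_zero_right
    (hf : ∀ n m, n ≠ 0 ∨ m ≠ 0 → f n m = ∑ k ∈ range n, f k m + ∑ j ∈ range m, f n j)
    (n : ℕ) : doublePartialSum f n 0 = 2 ^ n * f 0 0 := by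
  induction n with
  | zero => simp [doublePartialSum]
  | succ n ih =>
    have h := hf (n + 1) 0 (.inl n.succ_ne_zero)
    simp only [range_zero, sum_empty, add_zero] at h
    have hS : doublePartialSum f n 0 = ∑ k ∈ range (n + 1), f k 0 := by
      simp [doublePartialSum]
    rw [doublePartialSum_succ_left, sum_range_one, h, ← hS, ih]
    ring

lemma doublePartialSum_zero_left
    (hf : ∀ n m, n ≠ 0 ∨ m ≠ 0 → f n m = ∑ k ∈ range n, f k m + ∑ j ∈ range m, f n j)
    (m : ℕ) : doublePartialSum f 0 m = 2 ^ m * f 0 0 := by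
  rw [← doublePartialSum_flip, doublePartialSum_zero_right (fun n m h => ?_)]
  · rfl
  · rw [flip, hf m n h.symm, add_comm]
    rfl

end DoubleSequences

section CentralCoefficients

open Polynomial

variable {R : Type*} [CommRing R] {a b c : R} {p : R[X]}

noncomputable def centralCoeff (p : R[X]) (n : ℕ) : R := (p ^ n).coeff n

lemma coeff_pow_succ_add_two (hp : p = C a + C b * X + C c * X ^ 2) (n m : ℕ) :
    (p ^ (n + 1)).coeff (m + 2) =
      a * (p ^ n).coeff (m + 2) + b * (p ^ n).coeff (m + 1) + c * (p ^ n).coeff m := by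
  rw [pow_succ', hp]
  simp only [add_mul, mul_assoc, coeff_add, coeff_C_mul, coeff_X_mul, pow_two]

lemma add_two_mul_coeff_pow_succ (hp : p = C a + C b * X + C c * X ^ 2) (n m : ℕ) :
    (m + 2 : R) * (p ^ (n + 1)).coeff (m + 2) =
      (n + 1) * (b * (p ^ n).coeff (m + 1) + 2 * c * (p ^ n).coeff m) := by
  have hp' : derivative p = C b + C (2 * c) * X := by
    rw [hp, derivative_add, derivative_add, derivative_C, derivative_C_mul_X,
      derivative_C_mul_X_pow]
    norm_num [mul_comm c]
  have h := coeff_derivative (p ^ (n + 1)) (m + 1)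
  rw [show derivative (p ^ (n + 1)) = C (n + 1 : R) * (C b * p ^ n + X * (C (2 * c) * p ^ n)) by
    rw [derivative_pow_succ, hp']; ring] at h
  simp only [coeff_C_mul, coeff_add, coeff_X_mul] at h
  push_cast at h
  linear_combination -h

lemma centralCoeff_zero (p : R[X]) : centralCoeff p 0 = 1 := by
  simp [centralCoeff]

lemma centralCoeff_one (hp : p = C a + C b * X + C c * X ^ 2) : centralCoeff p 1 = b := by
  simp [centralCoeff, hp]

variable [IsAddTorsionFree R]

lemma centralCoeff_succ (hp : p = C a + C b * X + C c * X ^ 2) (n : ℕ) :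
    centralCoeff p (n + 1) = b * centralCoeff p n + 2 * a * (p ^ n).coeff (n + 1) := by
  rcases n with _ | n
  · simp [centralCoeff_one hp, centralCoeff_zero, coeff_one]
  have h₁ := coeff_pow_succ_add_two hp (n + 1) n
  have h₂ : (p ^ (n + 2)).coeff (n + 2) =
      b * (p ^ (n + 1)).coeff (n + 1) + 2 * c * (p ^ (n + 1)).coeff n := by
    refine nsmul_right_injective (M := R) (n := n + 2) (by omega) ?_
    have h := add_two_mul_coeff_pow_succ hp (n + 1) n
    simp only [nsmul_eq_mul]
    push_cast at h ⊢
    linear_combination h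
  simp only [centralCoeff]
  linear_combination 2 * h₁ - h₂

lemma centralCoeff_recurrence (hp : p = C a + C b * X + C c * X ^ 2) (n : ℕ) :
    (n + 2 : R) * centralCoeff p (n + 2) =
      (2 * n + 3) * b * centralCoeff p (n + 1) -
        (n + 1) * (b ^ 2 - 4 * a * c) * centralCoeff p n := by
  have e₁ := centralCoeff_succ hp (n + 1)
  have e₂ := centralCoeff_succ hp n
  have e₃ := add_two_mul_coeff_pow_succ hp n n
  unfold centralCoeff at *
  linear_combination (n + 2 : R) * e₁ + 2 * a * e₃ - (n + 1 : R) * b * e₂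

end CentralCoefficients

section RecurrenceSeries

open PowerSeries

variable {R : Type*} [CommRing R] {b δ : R} {t : ℕ → R}

lemma mul_derivative_mk_of_recurrence (h₁ : t 1 = b * t 0)
    (hrec : ∀ n : ℕ, (n + 2 : R) * t (n + 2) = (2 * n + 3) * b * t (n + 1) - (n + 1) * δ * t n) :
    (1 - C (2 * b) * X + C δ * X ^ 2) * d⁄dX R (mk t) = (C b - C δ * X) * mk t := by
  rw [show ∀ F : R⟦X⟧, (1 - C (2 * b) * X + C δ * X ^ 2) * F =
    F - C (2 * b) * (X * F) + C δ * (X * (X * F)) by intro F; ring,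
    sub_mul, mul_assoc]
  ext N
  rcases N with _ | _ | n <;>
    simp only [map_add, map_sub, coeff_C_mul, coeff_zero_X_mul, coeff_succ_X_mul,
      coeff_derivative, coeff_mk]
  · linear_combination h₁
  · linear_combination hrec 0
  · have h := hrec (n + 1)
    push_cast at h ⊢
    linear_combination h

lemma mul_mk_sq_eq_one_of_recurrence [IsAddTorsionFree R] (h₀ : t 0 = 1) (h₁ : t 1 = b)
    (hrec : ∀ n : ℕ, (n + 2 : R) * t (n + 2) = (2 * n + 3) * b * t (n + 1) - (n + 1) * δ * t n) :
    (1 - C (2 * b) * X + C δ * X ^ 2) * mk t ^ 2 = 1 := by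
  have hode := mul_derivative_mk_of_recurrence (by rw [h₀, h₁, mul_one]) hrec
  apply derivative.ext
  · have hA : d⁄dX R (1 - C (2 * b) * X + C δ * X ^ 2) = 2 * C δ * X - 2 * C b := by
      simp only [map_add, map_sub, derivative_one, Derivation.leibniz, Derivation.leibniz_pow,
        derivative_C, derivative_X, smul_eq_mul]
      rw [map_mul, map_ofNat]
      ring
    rw [Derivation.leibniz, Derivation.leibniz_pow, hA, derivative_one, smul_eq_mul, smul_eq_mul]
    linear_combination (2 * mk t) * hode
  · simp [h₀]

end RecurrenceSeries

section TwoDimensionalRookWalks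

open Finset Polynomial

/-- The coefficient of `xⁿ yᵐ` in `1 / (1 - 2x - 2y + 3xy)`, the generating function of the
partial sums `∑_{k ≤ n, j ≤ m} a(k, j)`. -/
noncomputable def rookBoxCoeff (n m : ℕ) : ℚ := ((2 + X) ^ n * (1 + 2 * X) ^ m : ℚ[X]).coeff m

lemma rookBoxCoeff_succ_succ (n m : ℕ) :
    rookBoxCoeff (n + 1) (m + 1) =
      2 * rookBoxCoeff n (m + 1) + 2 * rookBoxCoeff (n + 1) m - 3 * rookBoxCoeff n m := by
  have h : ((2 + X) ^ (n + 1) * (1 + 2 * X) ^ (m + 1) : ℚ[X]) =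
      2 * ((2 + X) ^ n * (1 + 2 * X) ^ (m + 1)) +
        X * (2 * ((2 + X) ^ (n + 1) * (1 + 2 * X) ^ m) - 3 * ((2 + X) ^ n * (1 + 2 * X) ^ m)) := by
    ring
  simp only [rookBoxCoeff, h, coeff_add, coeff_sub, coeff_ofNat_mul, coeff_X_mul]
  ring

lemma rookBoxCoeff_zero_right (n : ℕ) : rookBoxCoeff n 0 = 2 ^ n := by
  simp [rookBoxCoeff, coeff_zero_eq_eval_zero]

lemma rookBoxCoeff_zero_left (m : ℕ) : rookBoxCoeff 0 m = 2 ^ m := by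
  have h : (1 + 2 * X : ℚ[X]).natDegree ≤ 1 := by compute_degree
  simpa [rookBoxCoeff, coeff_one] using coeff_pow_of_natDegree_le (m := m) h

lemma doublePartialSum_rookWalkCount :
    doublePartialSum (fun n m => (rookWalkCount 2 ![n, m] : ℚ)) = rookBoxCoeff := by
  have hf (n m : ℕ) (h : n ≠ 0 ∨ m ≠ 0) : (rookWalkCount 2 ![n, m] : ℚ) =
      ∑ k ∈ range n, (rookWalkCount 2 ![k, m] : ℚ) +
        ∑ j ∈ range m, (rookWalkCount 2 ![n, j] : ℚ) := by
    exact_mod_cast rookWalkCount_two_eq_sum h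
  have h₀ : (rookWalkCount 2 ![0, 0] : ℚ) = 1 := by
    rw [show ![0, 0] = (0 : Fin 2 → ℕ) by ext i; fin_cases i <;> rfl, rookWalkCount_zero]
    rfl
  refine eq_of_recurrence_of_axes (fun x y z => 2 * x + 2 * y - 3 * z)
    (doublePartialSum_succ_succ hf) rookBoxCoeff_succ_succ (fun m => ?_) (fun n => ?_)
  · rw [doublePartialSum_zero_left hf, rookBoxCoeff_zero_left, h₀, mul_one]
  · rw [doublePartialSum_zero_right hf, rookBoxCoeff_zero_right, h₀, mul_one]

lemma two_mul_rookWalkCount_diag (k : ℕ) :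
    2 * (rookWalkCount 2 (fun _ => k + 1) : ℚ) =
      centralCoeff ((2 + X) * (1 + 2 * X)) (k + 1) - centralCoeff ((2 + X) * (1 + 2 * X)) k := by
  have h : (2 : ℚ[X]) * ((2 + X) ^ (k + 1) * (1 + 2 * X) ^ (k + 1) -
      (2 + X) ^ k * (1 + 2 * X) ^ (k + 1) - X * ((2 + X) ^ (k + 1) * (1 + 2 * X) ^ k) +
      X * ((2 + X) ^ k * (1 + 2 * X) ^ k)) =
      (2 + X) ^ (k + 1) * (1 + 2 * X) ^ (k + 1) - X * ((2 + X) ^ k * (1 + 2 * X) ^ k) := by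
    ring
  have hk := congrArg (coeff · (k + 1)) h
  simp only [coeff_ofNat_mul, coeff_sub, coeff_add, coeff_X_mul] at hk
  rw [show (fun _ : Fin 2 => k + 1) = ![k + 1, k + 1] by ext i; fin_cases i <;> rfl,
    apply_succ_succ_eq_doublePartialSum (fun n m => (rookWalkCount 2 ![n, m] : ℚ)),
    doublePartialSum_rookWalkCount]
  simp only [rookBoxCoeff, centralCoeff, mul_pow]
  linear_combination hk

end TwoDimensionalRookWalks

open PowerSeries

/-- The diagonal generating function `D(x) = ∑ a(n,n) xⁿ` of 2-dimensional rook
walk numbers satisfies `(1 - 10x + 9x²)·(2D - 1)² = (1-x)²`, i.e.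
`D = 1/2 + (1-x)/(2√(1-10x+9x²))`. -/
theorem rook_diagonal_gf_two_dim
    (D : PowerSeries ℚ)
    (hD : ∀ n : ℕ, PowerSeries.coeff n D =
      (rookWalkCount 2 (fun _ => n) : ℚ)) :
    (1 - 10 * X + 9 * X ^ 2) * (2 * D - 1) ^ 2 = (1 - X) ^ 2 := by
  set p : Polynomial ℚ := (2 + Polynomial.X) * (1 + 2 * Polynomial.X)
  have hp : p = Polynomial.C 2 + Polynomial.C 5 * Polynomial.X +
      Polynomial.C 2 * Polynomial.X ^ 2 := by
    simp only [p, map_ofNat]; ring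
  have hT : (1 - 10 * X + 9 * X ^ 2) * mk (centralCoeff p) ^ 2 = 1 := by
    have h := mul_mk_sq_eq_one_of_recurrence (centralCoeff_zero p) (centralCoeff_one hp)
      (centralCoeff_recurrence hp)
    norm_num at h
    exact h
  have hDT : 2 * D - 1 = (1 - X) * mk (centralCoeff p) := by
    ext n
    rw [two_mul, sub_mul, one_mul]
    rcases n with _ | k
    · simp only [map_sub, map_add, hD, coeff_one, coeff_mk, coeff_zero_X_mul, if_true,
        centralCoeff_zero]
      rw [show (fun _ : Fin 2 => 0) = 0 from rfl, rookWalkCount_zero]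
      norm_num
    · simp only [map_sub, map_add, hD, coeff_one, coeff_mk, coeff_succ_X_mul, k.succ_ne_zero,
        if_false]
      linear_combination two_mul_rookWalkCount_diag k
  rw [hDT]
  linear_combination (1 - X) ^ 2 * hT
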